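/- Let W ⊂ ℝ^d be a convex body of constant width 1, let p be a boundary point of W, and let n_i, n_j be outer normal vectors of supporting hyperplanes of W at p. Then (n_i · n_j)/(‖n_i‖·‖n_j‖) ≥ cos(π/3) = 1/2. -/

import Mathlib

open scoped RealInnerProductSpace

/-- `W` has constant width 1: for every unit direction the distance between the two
parallel supporting hyperplanes orthogonal to it equals 1. -/
def HasConstantWidthOne {d : ℕ} (W : Set (EuclideanSpace ℝ (Fin d))) : Prop :=
  ∀ u : EuclideanSpace ℝ (Fin d), ‖u‖ = 1 →
    sSup ((fun x => ⟪u, x⟫) '' W) - sInf ((fun x => ⟪u, x⟫) '' W) = 1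

/-- `n` is an outer normal (not necessarily unit) of a supporting hyperplane at `p`. -/
def IsOuterNormalAt {d : ℕ} (W : Set (EuclideanSpace ℝ (Fin d)))
    (p n : EuclideanSpace ℝ (Fin d)) : Prop :=
  n ≠ 0 ∧ ∀ x ∈ W, ⟪n, x⟫ ≤ ⟪n, p⟫

/-! If `u` is a unit outer normal at `p`, the opposite supporting hyperplane is at distance 1
and meets `W` in a point `q`; as `‖p - q‖ ≤ diam W = 1`, equality in Cauchy–Schwarz forces
`q = p - u`. For two unit outer normals `u`, `v` at `p` both `p - u` and `p - v` thus lie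
in `W`, so `‖u - v‖ ≤ 1`, which for unit vectors is `⟪u, v⟫ ≥ 1/2`. -/

section InnerProductSpace

variable {E : Type*} [NormedAddCommGroup E] [InnerProductSpace ℝ E]

lemma real_inner_normalize_normalize (x y : E) :
    ⟪NormedSpace.normalize x, NormedSpace.normalize y⟫ = ⟪x, y⟫ / (‖x‖ * ‖y‖) := by
  simp only [NormedSpace.normalize, real_inner_smul_left, real_inner_smul_right]
  field_simp

lemma half_le_real_inner_of_norm_sub_le_one {u v : E} (hu : ‖u‖ = 1) (hv : ‖v‖ = 1)
    (huv : ‖u - v‖ ≤ 1) : 1 / 2 ≤ ⟪u, v⟫ := by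
  have := norm_sub_sq_real u v
  rw [hu, hv] at this
  nlinarith [norm_nonneg (u - v)]

end InnerProductSpace

variable {d : ℕ} {W : Set (EuclideanSpace ℝ (Fin d))}

lemma IsOuterNormalAt.isMaxOn_inner_normalize {p n : EuclideanSpace ℝ (Fin d)}
    (hn : IsOuterNormalAt W p n) : IsMaxOn (⟪NormedSpace.normalize n, ·⟫) W p := fun x hx => by
  simp only [Set.mem_ofPred_eq, NormedSpace.normalize, real_inner_smul_left]
  exact mul_le_mul_of_nonneg_left (hn.2 x hx) (inv_nonneg.mpr (norm_nonneg n))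

namespace HasConstantWidthOne

lemma inner_sub_le_one (hW : HasConstantWidthOne W) (hWc : IsCompact W)
    {u x y : EuclideanSpace ℝ (Fin d)} (hu : ‖u‖ = 1) (hx : x ∈ W) (hy : y ∈ W) :
    ⟪u, x - y⟫ ≤ 1 := by
  have hcont : Continuous (⟪u, ·⟫) := continuous_const.inner continuous_id
  have hsup := le_csSup (hWc.image hcont).bddAbove (Set.mem_image_of_mem _ hx)
  have hinf := csInf_le (hWc.image hcont).bddBelow (Set.mem_image_of_mem _ hy)
  rw [inner_sub_right]
  linarith [hW u hu]

lemma norm_sub_le_one (hW : HasConstantWidthOne W) (hWc : IsCompact W)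
    {x y : EuclideanSpace ℝ (Fin d)} (hx : x ∈ W) (hy : y ∈ W) : ‖x - y‖ ≤ 1 := by
  rcases eq_or_ne (x - y) 0 with hxy | hxy
  · simp [hxy]
  have := hW.inner_sub_le_one hWc (NormedSpace.norm_normalize_eq_one_iff.mpr hxy) hx hy
  rwa [NormedSpace.normalize, real_inner_smul_left, real_inner_self_eq_norm_mul_norm,
    inv_mul_cancel_left₀ (norm_ne_zero_iff.mpr hxy)] at this

lemma sub_mem_of_isMaxOn (hW : HasConstantWidthOne W) (hWc : IsCompact W)
    {p u : EuclideanSpace ℝ (Fin d)} (hp : p ∈ W) (hu : ‖u‖ = 1)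
    (hmax : IsMaxOn (⟪u, ·⟫) W p) : p - u ∈ W := by
  have hcont : Continuous (⟪u, ·⟫) := continuous_const.inner continuous_id
  obtain ⟨q, hq, hmin⟩ := hWc.exists_isMinOn ⟨p, hp⟩ hcont.continuousOn
  have hsup : sSup ((⟪u, ·⟫) '' W) = ⟪u, p⟫ :=
    IsGreatest.csSup_eq ⟨Set.mem_image_of_mem _ hp, Set.forall_mem_image.mpr hmax⟩
  have hinf : sInf ((⟪u, ·⟫) '' W) = ⟪u, q⟫ :=
    IsLeast.csInf_eq ⟨Set.mem_image_of_mem _ hq, Set.forall_mem_image.mpr hmin⟩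
  have hwidth : ⟪u, p - q⟫ = 1 := by
    rw [inner_sub_right, ← hsup, ← hinf, hW u hu]
  have hpq : ‖p - q‖ = 1 := by
    refine le_antisymm (hW.norm_sub_le_one hWc hp hq) ?_
    simpa [hwidth, hu] using real_inner_le_norm u (p - q)
  have : u = p - q := (inner_eq_one_iff_of_norm_eq_one hu hpq).mp hwidth
  rwa [this, sub_sub_cancel]

end HasConstantWidthOne

theorem normals_angle_le_pi_div_three_general {d : ℕ}
    (W : Set (EuclideanSpace ℝ (Fin d)))
    (hWc : IsCompact W)
    (hW : HasConstantWidthOne W)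
    (p : EuclideanSpace ℝ (Fin d)) (hp : p ∈ frontier W)
    (ni nj : EuclideanSpace ℝ (Fin d))
    (hni : IsOuterNormalAt W p ni) (hnj : IsOuterNormalAt W p nj) :
    (1 : ℝ) / 2 ≤ ⟪ni, nj⟫ / (‖ni‖ * ‖nj‖) := by
  have hpW : p ∈ W := hWc.isClosed.frontier_subset hp
  have hu : ‖NormedSpace.normalize ni‖ = 1 := NormedSpace.norm_normalize_eq_one_iff.mpr hni.1
  have hv : ‖NormedSpace.normalize nj‖ = 1 := NormedSpace.norm_normalize_eq_one_iff.mpr hnj.1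
  have hdist := hW.norm_sub_le_one hWc
    (hW.sub_mem_of_isMaxOn hWc hpW hv hnj.isMaxOn_inner_normalize)
    (hW.sub_mem_of_isMaxOn hWc hpW hu hni.isMaxOn_inner_normalize)
  rw [sub_sub_sub_cancel_left] at hdist
  rw [← real_inner_normalize_normalize]
  exact half_le_real_inner_of_norm_sub_le_one hu hv hdist

theorem normals_angle_le_pi_div_three {d : ℕ}
    (W : Set (EuclideanSpace ℝ (Fin d)))
    (hWc : IsCompact W) (hWconv : Convex ℝ W) (hWint : (interior W).Nonempty)
    (hW : HasConstantWidthOne W)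
    (p : EuclideanSpace ℝ (Fin d)) (hp : p ∈ frontier W)
    (ni nj : EuclideanSpace ℝ (Fin d))
    (hni : IsOuterNormalAt W p ni) (hnj : IsOuterNormalAt W p nj) :
    (1 : ℝ) / 2 ≤ ⟪ni, nj⟫ / (‖ni‖ * ‖nj‖) :=
  normals_angle_le_pi_div_three_general W hWc hW p hp ni nj hni hnj
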